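/- arXiv:math/0611108 — 7 statements merged into one kernel-verified Lean document; each statement's English description precedes it below -/
import Mathlib

section
/- Let φ(t) = (1/n)·Σ_{j=1}^n exp(iμ_j t - σ_j²t²/2) with σ_j ≥ σ₀ > 0 for all j, and suppose the number of indices j with (μ_j,σ_j) ≠ (μ₀,σ₀) is at most ε₀·n with ε₀ < 1/2. Then for all t > 0, (1 - 2ε₀)·exp(-σ₀²t²/2) ≤ |φ(t)| ≤ exp(-σ₀²t²/2). -/
/-!
Each summand is the characteristic function of `N(μ_j, σ_j²)` at `t`, of modulus
`exp(-σ_j² t² / 2) ≤ exp(-σ₀² t² / 2)`; the triangle inequality gives the upper bound. The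
summands with `(μ_j, σ_j) = (μ₀, σ₀)` all equal one and the same number `w` of modulus
`exp(-σ₀² t² / 2)`, so they add up coherently, and the at most `ε₀ n` other summands can cancel
at most `ε₀ n · |w|` of the resulting `(1 - ε₀) n · |w|`.
-/

open Complex Real Finset

section NormSum

variable {ι E : Type*} [SeminormedAddCommGroup E]

theorem norm_sum_le_card_mul (s : Finset ι) (f : ι → E) {C : ℝ} (hf : ∀ j ∈ s, ‖f j‖ ≤ C) :
    ‖∑ j ∈ s, f j‖ ≤ #s * C := by
  simpa using norm_sum_le_of_le s hf

theorem card_sub_two_mul_card_bad_mul_le_norm_sum [NormedSpace ℝ E] (s : Finset ι) (f : ι → E) (w : E)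
    (bad : ι → Prop) [DecidablePred bad] (hgood : ∀ j ∈ s, ¬bad j → f j = w)
    (hle : ∀ j ∈ s, ‖f j‖ ≤ ‖w‖) :
    ((#s : ℝ) - 2 * #{j ∈ s | bad j}) * ‖w‖ ≤ ‖∑ j ∈ s, f j‖ := by
  set B := {j ∈ s | bad j}
  have hcard : #B + #{j ∈ s | ¬bad j} = #s := card_filter_add_card_filter_not bad
  have hsum_good : ∑ j ∈ s with ¬bad j, f j = #{j ∈ s | ¬bad j} • w :=
    sum_eq_card_nsmul fun j hj => hgood j (mem_filter.1 hj).1 (mem_filter.1 hj).2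
  have hsplit : ∑ j ∈ s, f j = #{j ∈ s | ¬bad j} • w + ∑ j ∈ B, f j := by
    rw [← hsum_good, add_comm, sum_filter_add_sum_filter_not]
  have hbad : ‖∑ j ∈ B, f j‖ ≤ #B * ‖w‖ :=
    norm_sum_le_card_mul B f fun j hj => hle j (mem_filter.1 hj).1
  have hgood_norm : ‖#{j ∈ s | ¬bad j} • w‖ = #{j ∈ s | ¬bad j} * ‖w‖ := by
    rw [← Nat.cast_smul_eq_nsmul ℝ, norm_smul, Real.norm_natCast]
  have hcard' : (#{j ∈ s | ¬bad j} : ℝ) = #s - #B := by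
    rw [← hcard]; push_cast; ring
  calc ((#s : ℝ) - 2 * #B) * ‖w‖
      = ‖#{j ∈ s | ¬bad j} • w‖ - #B * ‖w‖ := by rw [hgood_norm, hcard']; ring
    _ ≤ ‖#{j ∈ s | ¬bad j} • w‖ - ‖∑ j ∈ B, f j‖ := by gcongr
    _ ≤ ‖∑ j ∈ s, f j‖ := by
      have := norm_le_norm_add_norm_sub' (#{j ∈ s | ¬bad j} • w) (∑ j ∈ s, f j)
      rw [hsplit, sub_add_cancel_left, norm_neg] at this
      rw [hsplit]; linarith

end NormSum

theorem norm_exp_gaussian_charFun (m s t : ℝ) :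
    ‖Complex.exp (Complex.I * m * t - s ^ 2 * t ^ 2 / 2)‖ = Real.exp (-s ^ 2 * t ^ 2 / 2) := by
  rw [Complex.norm_exp]
  congr 1
  simp only [sub_re, mul_re, I_re, I_im, ofReal_re, ofReal_im, div_re, pow_two, mul_im]
  norm_num
  ring

theorem norm_exp_gaussian_charFun_le {s₀ s : ℝ} (hs₀ : 0 ≤ s₀) (hs : s₀ ≤ s) (m t : ℝ) :
    ‖Complex.exp (Complex.I * m * t - s ^ 2 * t ^ 2 / 2)‖ ≤ Real.exp (-s₀ ^ 2 * t ^ 2 / 2) := by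
  rw [norm_exp_gaussian_charFun]
  gcongr

theorem stmt2_general (n : ℕ) (hn : 0 < n) (μ₀ σ₀ ε₀ : ℝ) (hσ : 0 < σ₀)
    (μ σ : Fin n → ℝ) (hσj : ∀ j, σ₀ ≤ σ j)
    (hprop : ((Finset.univ.filter (fun j => (μ j, σ j) ≠ (μ₀, σ₀))).card : ℝ) ≤ ε₀ * n)
    (φ : ℝ → ℂ)
    (hφ : ∀ t : ℝ, φ t = (1 / n : ℝ) *
      ∑ j, Complex.exp (Complex.I * (μ j) * t - (σ j) ^ 2 * t ^ 2 / 2)) :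
    ∀ t : ℝ, 0 < t →
      (1 - 2 * ε₀) * Real.exp (-σ₀ ^ 2 * t ^ 2 / 2) ≤ ‖φ t‖ ∧
      ‖φ t‖ ≤ Real.exp (-σ₀ ^ 2 * t ^ 2 / 2) := by
  intro t _
  set f : Fin n → ℂ := fun j => Complex.exp (Complex.I * (μ j) * t - (σ j) ^ 2 * t ^ 2 / 2)
  set w : ℂ := Complex.exp (Complex.I * μ₀ * t - σ₀ ^ 2 * t ^ 2 / 2)
  have hw : ‖w‖ = Real.exp (-σ₀ ^ 2 * t ^ 2 / 2) := norm_exp_gaussian_charFun μ₀ σ₀ t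
  have hle : ∀ j ∈ univ, ‖f j‖ ≤ ‖w‖ := fun j _ =>
    hw ▸ norm_exp_gaussian_charFun_le hσ.le (hσj j) (μ j) t
  have hgood : ∀ j ∈ univ, ¬(μ j, σ j) ≠ (μ₀, σ₀) → f j = w := by
    intro j _ hj
    obtain ⟨hμ, hs⟩ := Prod.mk.inj (not_not.1 hj)
    simp only [f, w, hμ, hs]
  have hlower := card_sub_two_mul_card_bad_mul_le_norm_sum univ f w _ hgood hle
  have hupper := norm_sum_le_card_mul univ f hle
  have hn' : (0 : ℝ) < n := Nat.cast_pos.2 hn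
  have hφt : ‖φ t‖ = ‖∑ j, f j‖ / n := by
    rw [hφ t, norm_mul, Complex.norm_real, Real.norm_of_nonneg (by positivity)]
    ring
  rw [hφt, ← hw, le_div_iff₀ hn', div_le_iff₀ hn']
  simp only [card_univ, Fintype.card_fin] at hlower hupper
  constructor
  · nlinarith [norm_nonneg w]
  · linarith

theorem stmt2 (n : ℕ) (hn : 0 < n) (μ₀ σ₀ ε₀ : ℝ) (hσ : 0 < σ₀)
    (hε₀ : 0 < ε₀) (hε₀' : ε₀ < 1 / 2)
    (μ σ : Fin n → ℝ) (hσj : ∀ j, σ₀ ≤ σ j)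
    (hprop : ((Finset.univ.filter (fun j => (μ j, σ j) ≠ (μ₀, σ₀))).card : ℝ) ≤ ε₀ * n)
    (φ : ℝ → ℂ)
    (hφ : ∀ t : ℝ, φ t = (1 / n : ℝ) *
      ∑ j, Complex.exp (Complex.I * (μ j) * t - (σ j) ^ 2 * t ^ 2 / 2)) :
    ∀ t : ℝ, 0 < t →
      (1 - 2 * ε₀) * Real.exp (-σ₀ ^ 2 * t ^ 2 / 2) ≤ ‖φ t‖ ∧
      ‖φ t‖ ≤ Real.exp (-σ₀ ^ 2 * t ^ 2 / 2) :=
  stmt2_general n hn μ₀ σ₀ ε₀ hσ μ σ hσj hprop φ hφ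
end

section
/- For any t > 0 and any complex-valued functions f, g differentiable at t with |f(t)| ≠ 0 and |g(t)| ≠ 0, the functionals σ₀²(h;t) = -(d/dt|h(t)|)/(t|h(t)|) satisfy: |σ₀²(f;t) - σ₀²(g;t)| ≤ (|g(t)|/(t|f(t)|²))·[(2t·|σ₀²(g;t)| + |g'(t)/g(t)|)·|f(t)-g(t)| + |f'(t)-g'(t)| + r(t)], where r(t) = (1/|g(t)|)·[t·|σ₀²(g;t)|·|f(t)-g(t)|² + |f(t)-g(t)|·|f'(t)-g'(t)|]. -/
/-!
Since `d/dt |h| = ⟪h, h'⟫ / |h|` wherever `h ≠ 0`, we have `t |h|² σ₀²(h;t) = -⟪h, h'⟫`. Hence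
`t |f|² (σ₀²(f) - σ₀²(g)) = -(⟪f, f'⟫ - ⟪g, g'⟫) - t σ₀²(g) (|f|² - |g|²)`, and the two
differences on the right are bounded by the elementary estimates
`|⟪f, f'⟫ - ⟪g, g'⟫| ≤ |f| |f' - g'| + |f - g| |g'|` with `|f| ≤ |g| + |f - g|`, and
`||f|² - |g|²| ≤ 2 |g| |f - g| + |f - g|²`.
-/

open Complex Real

/-- The functional `σ₀²(f;t) = -(d/dt|f(t)|)/(t·|f(t)|)`. -/
noncomputable def sigmaSqFun (f : ℝ → ℂ) (t : ℝ) : ℝ :=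
  -(deriv (fun s : ℝ => ‖f s‖) t) / (t * ‖f t‖)

open scoped InnerProductSpace

section InnerProductSpace

variable {F : Type*} [NormedAddCommGroup F] [InnerProductSpace ℝ F]

theorem deriv_norm_eq_inner_div {h : ℝ → F} {t : ℝ} (hd : DifferentiableAt ℝ h t)
    (h0 : h t ≠ 0) :
    deriv (fun s => ‖h s‖) t = ⟪h t, deriv h t⟫_ℝ / ‖h t‖ := by
  have hnorm : HasDerivAt (fun s => ‖h s‖ ^ 2) (2 * ‖h t‖ * deriv (fun s => ‖h s‖) t) t := by
    simpa using (hd.norm ℝ h0).hasDerivAt.fun_pow 2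
  have hinner := hnorm.unique hd.hasDerivAt.norm_sq
  have hpos : 0 < ‖h t‖ := norm_pos_iff.mpr h0
  field_simp
  linarith

theorem abs_inner_sub_inner_le (a b a' b' : F) :
    |⟪a, a'⟫_ℝ - ⟪b, b'⟫_ℝ| ≤ ‖a‖ * ‖a' - b'‖ + ‖a - b‖ * ‖b'‖ := by
  have hsplit : ⟪a, a'⟫_ℝ - ⟪b, b'⟫_ℝ = ⟪a, a' - b'⟫_ℝ + ⟪a - b, b'⟫_ℝ := by
    rw [inner_sub_right, inner_sub_left]; ring
  rw [hsplit]
  exact (abs_add_le _ _).trans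
    (add_le_add (abs_real_inner_le_norm _ _) (abs_real_inner_le_norm _ _))

end InnerProductSpace

theorem abs_norm_sq_sub_norm_sq_le {E : Type*} [SeminormedAddCommGroup E] (a b : E) :
    |‖a‖ ^ 2 - ‖b‖ ^ 2| ≤ 2 * ‖b‖ * ‖a - b‖ + ‖a - b‖ ^ 2 := by
  have hdiff : |‖a‖ - ‖b‖| ≤ ‖a - b‖ := abs_norm_sub_norm_le a b
  have hsum : ‖a‖ + ‖b‖ ≤ 2 * ‖b‖ + ‖a - b‖ := by linarith [norm_le_norm_add_norm_sub' a b]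
  calc |‖a‖ ^ 2 - ‖b‖ ^ 2| = |‖a‖ - ‖b‖| * (‖a‖ + ‖b‖) := by
        rw [sq_sub_sq, abs_mul, abs_of_nonneg (by positivity : (0:ℝ) ≤ ‖a‖ + ‖b‖)]; ring
    _ ≤ ‖a - b‖ * (2 * ‖b‖ + ‖a - b‖) := by gcongr
    _ = 2 * ‖b‖ * ‖a - b‖ + ‖a - b‖ ^ 2 := by ring

theorem mul_norm_sq_mul_sigmaSqFun {h : ℝ → ℂ} {t : ℝ} (ht : t ≠ 0)
    (hd : DifferentiableAt ℝ h t) (h0 : h t ≠ 0) :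
    t * ‖h t‖ ^ 2 * sigmaSqFun h t = -⟪h t, deriv h t⟫_ℝ := by
  have hpos : 0 < ‖h t‖ := norm_pos_iff.mpr h0
  rw [sigmaSqFun, deriv_norm_eq_inner_div hd h0]
  field_simp

theorem mul_abs_sigmaSqFun_sub_le {f g : ℝ → ℂ} {t : ℝ} (ht : 0 < t)
    (hf : DifferentiableAt ℝ f t) (hg : DifferentiableAt ℝ g t)
    (hf0 : f t ≠ 0) (hg0 : g t ≠ 0) :
    t * ‖f t‖ ^ 2 * |sigmaSqFun f t - sigmaSqFun g t| ≤
      |⟪f t, deriv f t⟫_ℝ - ⟪g t, deriv g t⟫_ℝ| +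
        t * |sigmaSqFun g t| * |‖f t‖ ^ 2 - ‖g t‖ ^ 2| := by
  have hA : 0 < ‖f t‖ := norm_pos_iff.mpr hf0
  have hsplit : t * ‖f t‖ ^ 2 * (sigmaSqFun f t - sigmaSqFun g t) =
      -(⟪f t, deriv f t⟫_ℝ - ⟪g t, deriv g t⟫_ℝ) -
        t * sigmaSqFun g t * (‖f t‖ ^ 2 - ‖g t‖ ^ 2) := by
    linear_combination mul_norm_sq_mul_sigmaSqFun ht.ne' hf hf0 -
      mul_norm_sq_mul_sigmaSqFun ht.ne' hg hg0
  calc t * ‖f t‖ ^ 2 * |sigmaSqFun f t - sigmaSqFun g t|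
      = |t * ‖f t‖ ^ 2 * (sigmaSqFun f t - sigmaSqFun g t)| := by
        rw [abs_mul, abs_of_pos (by positivity : 0 < t * ‖f t‖ ^ 2)]
    _ ≤ _ := by
        rw [hsplit]
        refine (abs_sub _ _).trans ?_
        rw [abs_neg, abs_mul, abs_mul, abs_of_pos ht]

theorem stmt3_general (f g : ℝ → ℂ) (t : ℝ) (ht : 0 < t)
    (hf : DifferentiableAt ℝ f t) (hg : DifferentiableAt ℝ g t)
    (hf0 : f t ≠ 0) (hg0 : g t ≠ 0) :
    |sigmaSqFun f t - sigmaSqFun g t| ≤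
      (‖g t‖ / (t * (‖f t‖) ^ 2)) *
        ((2 * t * |sigmaSqFun g t| + ‖deriv g t / g t‖) *
            ‖f t - g t‖ +
          ‖deriv f t - deriv g t‖ +
          (1 / ‖g t‖) *
            (t * |sigmaSqFun g t| * (‖f t - g t‖) ^ 2 +
              ‖f t - g t‖ * ‖deriv f t - deriv g t‖)) := by
  have hA : 0 < ‖f t‖ := norm_pos_iff.mpr hf0
  have hB : 0 < ‖g t‖ := norm_pos_iff.mpr hg0
  have hinner := abs_inner_sub_inner_le (f t) (g t) (deriv f t) (deriv g t)
  have hsq := abs_norm_sq_sub_norm_sq_le (f t) (g t)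
  have hfg := norm_le_norm_add_norm_sub' (f t) (g t)
  rw [div_mul_eq_mul_div, le_div_iff₀ (by positivity), norm_div, mul_comm]
  calc t * ‖f t‖ ^ 2 * |sigmaSqFun f t - sigmaSqFun g t|
      ≤ |⟪f t, deriv f t⟫_ℝ - ⟪g t, deriv g t⟫_ℝ| +
          t * |sigmaSqFun g t| * |‖f t‖ ^ 2 - ‖g t‖ ^ 2| :=
        mul_abs_sigmaSqFun_sub_le ht hf hg hf0 hg0
    _ ≤ (‖g t‖ + ‖f t - g t‖) * ‖deriv f t - deriv g t‖ + ‖f t - g t‖ * ‖deriv g t‖ +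
          t * |sigmaSqFun g t| * (2 * ‖g t‖ * ‖f t - g t‖ + ‖f t - g t‖ ^ 2) := by
        gcongr
        exact hinner.trans (by gcongr)
    _ = _ := by field_simp; ring

theorem stmt3 (f g : ℝ → ℂ) (t : ℝ) (ht : 0 < t)
    (hf : DifferentiableAt ℝ f t) (hg : DifferentiableAt ℝ g t)
    (hfabs : DifferentiableAt ℝ (fun s : ℝ => ‖f s‖) t)
    (hgabs : DifferentiableAt ℝ (fun s : ℝ => ‖g s‖) t)
    (hf0 : f t ≠ 0) (hg0 : g t ≠ 0) :
    |sigmaSqFun f t - sigmaSqFun g t| ≤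
      (‖g t‖ / (t * (‖f t‖) ^ 2)) *
        ((2 * t * |sigmaSqFun g t| + ‖deriv g t / g t‖) *
            ‖f t - g t‖ +
          ‖deriv f t - deriv g t‖ +
          (1 / ‖g t‖) *
            (t * |sigmaSqFun g t| * (‖f t - g t‖) ^ 2 +
              ‖f t - g t‖ * ‖deriv f t - deriv g t‖)) :=
  stmt3_general f g t ht hf hg hf0 hg0
end

section
/- For any t > 0 and complex-valued functions f, g differentiable at t with |f(t)| ≠ 0 and |g(t)| ≠ 0, define μ₀(h;t) = [Re(h(t))Im(h'(t)) - Re(h'(t))Im(h(t))]/|h(t)|². Then |μ₀(f;t) - μ₀(g;t)| ≤ (|g(t)|/|f(t)|²)·[(2|μ₀(g;t)| + |g'(t)/g(t)|)·|f(t)-g(t)| + |f'(t)-g'(t)| + r(t)], where r(t) = (1/|g(t)|)·[|μ₀(g;t)|·|f(t)-g(t)|² + |f(t)-g(t)|·|f'(t)-g'(t)|]. -/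
open Complex Real

/-- The functional `μ₀(h;t) = [Re(h(t))Im(h'(t)) - Re(h'(t))Im(h(t))]/|h(t)|²`. -/
noncomputable def muFun (h : ℝ → ℂ) (t : ℝ) : ℝ :=
  ((h t).re * (deriv h t).im - (deriv h t).re * (h t).im) / (‖h t‖) ^ 2

open ComplexConjugate

/-!
Since `μ₀(h;t) = Im(h'(t)/h(t))` and `‖z‖² Im(w/z) = Im(conj z · w)`, writing `f(t) = g(t) + d`,
`f'(t) = g'(t) + d'` and expanding both `Im(conj f(t) · f'(t))` and
`‖f(t)‖² = ‖g(t)‖² + 2 Re(conj g(t) · d) + ‖d‖²` expresses `‖f(t)‖² (μ₀(f;t) - μ₀(g;t))` through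
the products `conj g(t) · d'`, `conj d · g'(t)`, `conj d · d'` and `conj g(t) · d`. Each is bounded
by `|Re u|, |Im u| ≤ ‖u‖`, and `‖g'(t)‖ = ‖g(t)‖ ‖g'(t)/g(t)‖`.
-/

namespace Complex

theorem sq_norm_mul_im_div (z w : ℂ) : ‖z‖ ^ 2 * (w / z).im = (conj z * w).im := by
  rcases eq_or_ne z 0 with rfl | hz
  · simp
  · have : normSq z ≠ 0 := (normSq_pos.2 hz).ne'
    rw [div_im, Complex.sq_norm, mul_im, conj_re, conj_im]
    field_simp
    ring

theorem sq_norm_mul_im_div_sub_im_div (F F' G G' : ℂ) :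
    ‖F‖ ^ 2 * ((F' / F).im - (G' / G).im) =
      (conj G * (F' - G')).im + (conj (F - G) * G').im + (conj (F - G) * (F' - G')).im -
        (2 * (conj G * (F - G)).re + ‖F - G‖ ^ 2) * (G' / G).im := by
  have hF := sq_norm_mul_im_div F F'
  have hG := sq_norm_mul_im_div G G'
  have hnorm : ‖F‖ ^ 2 = ‖G‖ ^ 2 + 2 * (conj G * (F - G)).re + ‖F - G‖ ^ 2 := by
    simp only [Complex.sq_norm, normSq_apply, mul_re, conj_re, conj_im, sub_re, sub_im]
    ring
  have hexpand : (conj F * F').im = (conj G * G').im + (conj G * (F' - G')).im +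
      (conj (F - G) * G').im + (conj (F - G) * (F' - G')).im := by
    simp only [mul_im, conj_re, conj_im, sub_re, sub_im]
    ring
  rw [mul_sub, hF, hnorm, hexpand, ← hG]
  ring

theorem abs_im_conj_mul_le (z w : ℂ) : |(conj z * w).im| ≤ ‖z‖ * ‖w‖ :=
  (abs_im_le_norm _).trans_eq (by rw [norm_mul, norm_conj])

theorem abs_re_conj_mul_le (z w : ℂ) : |(conj z * w).re| ≤ ‖z‖ * ‖w‖ :=
  (abs_re_le_norm _).trans_eq (by rw [norm_mul, norm_conj])

theorem abs_im_div_sub_im_div_le {F G : ℂ} (F' G' : ℂ) (hF : F ≠ 0) (hG : G ≠ 0) :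
    |(F' / F).im - (G' / G).im| ≤
      (‖G‖ / ‖F‖ ^ 2) *
        ((2 * |(G' / G).im| + ‖G' / G‖) * ‖F - G‖ + ‖F' - G'‖ +
          (1 / ‖G‖) * (|(G' / G).im| * ‖F - G‖ ^ 2 + ‖F - G‖ * ‖F' - G'‖)) := by
  set μ := (G' / G).im
  set d := F - G
  set d' := F' - G'
  have hGpos : 0 < ‖G‖ := norm_pos_iff.mpr hG
  have hcross : |2 * (conj G * d).re + ‖d‖ ^ 2| ≤ 2 * (‖G‖ * ‖d‖) + ‖d‖ ^ 2 := by
    refine (abs_add_le _ _).trans ?_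
    rw [abs_mul, abs_two, abs_of_nonneg (sq_nonneg ‖d‖)]
    linarith [abs_re_conj_mul_le G d]
  have hnum : ‖F‖ ^ 2 * |(F' / F).im - μ| ≤
      ‖G‖ * ‖d'‖ + ‖d‖ * ‖G'‖ + ‖d‖ * ‖d'‖ + (2 * (‖G‖ * ‖d‖) + ‖d‖ ^ 2) * |μ| := by
    rw [← abs_of_nonneg (sq_nonneg ‖F‖), ← abs_mul, sq_norm_mul_im_div_sub_im_div]
    have := abs_mul (2 * (conj G * d).re + ‖d‖ ^ 2) μ
    have := mul_le_mul_of_nonneg_right hcross (abs_nonneg μ)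
    have := abs_sub ((conj G * d').im + (conj d * G').im + (conj d * d').im)
      ((2 * (conj G * d).re + ‖d‖ ^ 2) * μ)
    have := abs_add_three (conj G * d').im (conj d * G').im (conj d * d').im
    linarith [abs_im_conj_mul_le G d', abs_im_conj_mul_le d G', abs_im_conj_mul_le d d']
  have hbound : (‖G‖ / ‖F‖ ^ 2) *
      ((2 * |μ| + ‖G' / G‖) * ‖d‖ + ‖d'‖ + (1 / ‖G‖) * (|μ| * ‖d‖ ^ 2 + ‖d‖ * ‖d'‖)) =
      (‖G‖ * ‖d'‖ + ‖d‖ * ‖G'‖ + ‖d‖ * ‖d'‖ + (2 * (‖G‖ * ‖d‖) + ‖d‖ ^ 2) * |μ|) /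
        ‖F‖ ^ 2 := by
    rw [norm_div]
    field_simp
    ring
  rw [hbound, le_div_iff₀ (by positivity), mul_comm]
  exact hnum

end Complex

theorem muFun_eq_im_div (h : ℝ → ℂ) (t : ℝ) : muFun h t = (deriv h t / h t).im := by
  rw [muFun, div_im, Complex.sq_norm]
  ring

theorem stmt4_general (f g : ℝ → ℂ) (t : ℝ)
    (hf0 : f t ≠ 0) (hg0 : g t ≠ 0) :
    |muFun f t - muFun g t| ≤
      (‖g t‖ / (‖f t‖) ^ 2) *
        ((2 * |muFun g t| + ‖deriv g t / g t‖) * ‖f t - g t‖ +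
          ‖deriv f t - deriv g t‖ +
          (1 / ‖g t‖) *
            (|muFun g t| * (‖f t - g t‖) ^ 2 +
              ‖f t - g t‖ * ‖deriv f t - deriv g t‖)) := by
  simp only [muFun_eq_im_div]
  exact Complex.abs_im_div_sub_im_div_le _ _ hf0 hg0

theorem stmt4 (f g : ℝ → ℂ) (t : ℝ) (ht : 0 < t)
    (hf : DifferentiableAt ℝ f t) (hg : DifferentiableAt ℝ g t)
    (hf0 : f t ≠ 0) (hg0 : g t ≠ 0) :
    |muFun f t - muFun g t| ≤
      (‖g t‖ / (‖f t‖) ^ 2) *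
        ((2 * |muFun g t| + ‖deriv g t / g t‖) * ‖f t - g t‖ +
          ‖deriv f t - deriv g t‖ +
          (1 / ‖g t‖) *
            (|muFun g t| * (‖f t - g t‖) ^ 2 +
              ‖f t - g t‖ * ‖deriv f t - deriv g t‖)) :=
  stmt4_general f g t hf0 hg0
end

section
/- Let φ = φ₀·(1+r) where φ₀(t) = (1-ε_n)exp(iμ₀t - σ₀²t²/2) and r is a differentiable complex-valued function with 1 + r(t) ≠ 0. Then the functional σ₀²(φ;t) = -(d/dt|φ(t)|)/(t|φ(t)|) satisfies σ₀²(φ;t) - σ₀² = -(d/dt|1+r(t)|)/(t·|1+r(t)|), and hence |σ₀²(φ;t) - σ₀²| ≤ (|r'(t)|/t)·(1+|r(t)|)/|1+r(t)|². -/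
/-!
Since `σ₀²(f;t) = -(log ‖f‖)'(t) / t`, the functional is additive over products of non-vanishing
factors. On the Gaussian factor `c·exp(iμt - σ²t²/2)` it equals `σ²`, so `σ₀²(φ;t) - σ₀²` is the
functional of `1 + r`. Its size is controlled by `|(d/dt)‖g‖| ≤ ‖g'‖` (difference quotients of `‖g‖`
are dominated by those of `g`) together with `‖1 + r‖ ≤ 1 + ‖r‖`.
-/

open Complex Real

theorem abs_deriv_norm_le_norm_deriv {E : Type*} [NormedAddCommGroup E] [NormedSpace ℝ E]
    {g : ℝ → E} {t : ℝ} (hg : DifferentiableAt ℝ g t) :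
    |deriv (fun s => ‖g s‖) t| ≤ ‖deriv g t‖ := by
  by_cases hn : DifferentiableAt ℝ (fun s => ‖g s‖) t
  swap
  · rw [deriv_zero_of_not_differentiableAt hn, abs_zero]
    exact norm_nonneg _
  have hslope_norm := (hasDerivAt_iff_tendsto_slope.mp hn.hasDerivAt).abs
  have hslope := (hasDerivAt_iff_tendsto_slope.mp hg.hasDerivAt).norm
  refine le_of_tendsto_of_tendsto' hslope_norm hslope fun s => ?_
  simp only [slope, vsub_eq_sub, norm_smul, smul_eq_mul, abs_mul, Real.norm_eq_abs]
  exact mul_le_mul_of_nonneg_left (abs_norm_sub_norm_le _ _) (abs_nonneg _)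

theorem abs_sigmaSqFun_le {f : ℝ → ℂ} {t : ℝ} (hf : DifferentiableAt ℝ f t) :
    |sigmaSqFun f t| ≤ ‖deriv f t‖ / (|t| * ‖f t‖) := by
  rw [sigmaSqFun, abs_div, abs_neg, abs_mul, abs_norm]
  gcongr
  exact abs_deriv_norm_le_norm_deriv hf

theorem sigmaSqFun_mul {f g : ℝ → ℂ} {t : ℝ} (hf : DifferentiableAt ℝ f t)
    (hg : DifferentiableAt ℝ g t) (hf0 : f t ≠ 0) (hg0 : g t ≠ 0) :
    sigmaSqFun (fun s => f s * g s) t = sigmaSqFun f t + sigmaSqFun g t := by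
  rcases eq_or_ne t 0 with rfl | ht
  · simp [sigmaSqFun]
  have hnorm : (fun s => ‖f s * g s‖) = fun s => ‖f s‖ * ‖g s‖ := funext fun s => norm_mul _ _
  rw [sigmaSqFun, sigmaSqFun, sigmaSqFun, hnorm, deriv_fun_mul (hf.norm ℝ hf0) (hg.norm ℝ hg0),
    norm_mul]
  have hf_pos : 0 < ‖f t‖ := norm_pos_iff.mpr hf0
  have hg_pos : 0 < ‖g t‖ := norm_pos_iff.mpr hg0
  field_simp
  ring

theorem sigmaSqFun_gaussian (c : ℂ) (μ σ : ℝ) {t : ℝ} (hc : c ≠ 0) (ht : t ≠ 0) :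
    sigmaSqFun (fun s : ℝ => c * Complex.exp (Complex.I * μ * s - σ ^ 2 * s ^ 2 / 2)) t
      = σ ^ 2 := by
  have hnorm : (fun s : ℝ => ‖c * Complex.exp (Complex.I * μ * s - σ ^ 2 * s ^ 2 / 2)‖)
      = fun s => ‖c‖ * Real.exp (-(σ ^ 2 * s ^ 2) / 2) := by
    funext s
    rw [norm_mul, Complex.norm_exp]
    congr 2
    simp [← Complex.ofReal_pow]
    ring
  have hderiv : HasDerivAt (fun s => ‖c‖ * Real.exp (-(σ ^ 2 * s ^ 2) / 2))
      (‖c‖ * (Real.exp (-(σ ^ 2 * t ^ 2) / 2) * (-(σ ^ 2 * t)))) t := by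
    have hexponent : HasDerivAt (fun s : ℝ => -(σ ^ 2 * s ^ 2) / 2) (-(σ ^ 2 * t)) t := by
      refine (((hasDerivAt_pow 2 t).const_mul (σ ^ 2)).fun_neg.div_const 2).congr_deriv ?_
      push_cast
      ring
    exact hexponent.exp.const_mul _
  have hc_pos : 0 < ‖c‖ := norm_pos_iff.mpr hc
  rw [sigmaSqFun, hnorm, hderiv.deriv, congrFun hnorm t]
  field_simp

theorem stmt5_general (εn μ₀ σ₀ : ℝ) (hε1 : εn < 1)
    (r : ℝ → ℂ) (hr : Differentiable ℝ r)
    (φ : ℝ → ℂ)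
    (hφ : ∀ s : ℝ, φ s =
      (1 - εn) * Complex.exp (Complex.I * μ₀ * s - σ₀ ^ 2 * s ^ 2 / 2) * (1 + r s))
    (t : ℝ) (ht : 0 < t) (hr0 : 1 + r t ≠ 0) :
    sigmaSqFun φ t - σ₀ ^ 2 =
      -(deriv (fun s : ℝ => ‖1 + r s‖) t) / (t * ‖1 + r t‖) ∧
    |sigmaSqFun φ t - σ₀ ^ 2| ≤
      (‖deriv r t‖ / t) * (1 + ‖r t‖) / (‖1 + r t‖) ^ 2 := by
  have hc : (1 - εn : ℂ) ≠ 0 := sub_ne_zero.2 (by exact_mod_cast hε1.ne')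
  have hsplit : sigmaSqFun φ t - σ₀ ^ 2 = sigmaSqFun (fun s => 1 + r s) t := by
    rw [funext hφ, sigmaSqFun_mul (by fun_prop) ((hr t).const_add 1)
      (mul_ne_zero hc (Complex.exp_ne_zero _)) hr0, sigmaSqFun_gaussian _ _ _ hc ht.ne',
      add_sub_cancel_left]
  refine ⟨hsplit, ?_⟩
  have hr0_pos : 0 < ‖1 + r t‖ := norm_pos_iff.mpr hr0
  calc |sigmaSqFun φ t - σ₀ ^ 2| ≤ ‖deriv r t‖ / (t * ‖1 + r t‖) := by
        simpa [hsplit, abs_of_pos ht] using abs_sigmaSqFun_le ((hr t).const_add 1)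
    _ = ‖deriv r t‖ / t * ‖1 + r t‖ / ‖1 + r t‖ ^ 2 := by field_simp
    _ ≤ ‖deriv r t‖ / t * (1 + ‖r t‖) / ‖1 + r t‖ ^ 2 := by
        gcongr
        simpa using norm_add_le (1 : ℂ) (r t)

theorem stmt5 (εn μ₀ σ₀ : ℝ) (hε : 0 < εn) (hε1 : εn < 1) (hσ : 0 < σ₀)
    (r : ℝ → ℂ) (hr : Differentiable ℝ r)
    (φ : ℝ → ℂ)
    (hφ : ∀ s : ℝ, φ s =
      (1 - εn) * Complex.exp (Complex.I * μ₀ * s - σ₀ ^ 2 * s ^ 2 / 2) * (1 + r s))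
    (t : ℝ) (ht : 0 < t) (hr0 : 1 + r t ≠ 0) :
    sigmaSqFun φ t - σ₀ ^ 2 =
      -(deriv (fun s : ℝ => ‖1 + r s‖) t) / (t * ‖1 + r t‖) ∧
    |sigmaSqFun φ t - σ₀ ^ 2| ≤
      (‖deriv r t‖ / t) * (1 + ‖r t‖) / (‖1 + r t‖) ^ 2 :=
  stmt5_general εn μ₀ σ₀ hε1 r hr φ hφ t ht hr0
end

section
/- Let g(t) = (1/m)·Σ_{j=1}^m exp(i·a_j·t - b_j·t²/2) with a_j ∈ ℝ, b_j ≥ 0, (1/m)Σ_j(|a_j| + √b_j) ≤ A and (1/m)Σ_j b_j ≤ A². Let τ = min_j b_j. Then for all t > 0, |g'(t)| ≤ A·exp(-τt²/2) + min{A²·t·exp(-τt²/2), 2/(e·t)}. -/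
/-! The derivative of each summand is `(i a_j - b_j t) e^{i a_j t - b_j t²/2}`, of modulus at most
`(|a_j| + b_j t) e^{-b_j t²/2}`, and `e^{-b_j t²/2} ≤ e^{-τ t²/2}`. Averaging, the `|a_j|` parts give
`A e^{-τ t²/2}`. The `b_j t` parts are bounded in two ways: by `A² t e^{-τ t²/2}` through the average
of the `b_j`, and termwise by `2 / (e t)`, since `b t e^{-b t²/2} = x e^{-x/2} / t` with `x = b t²`. -/

open Complex Real Finset

lemma mul_exp_neg_half_le (x : ℝ) : x * rexp (-x / 2) ≤ 2 / rexp 1 := by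
  have hx : x ≤ 2 * rexp (x / 2 - 1) := by linarith [add_one_le_exp (x / 2 - 1)]
  calc x * rexp (-x / 2) ≤ 2 * rexp (x / 2 - 1) * rexp (-x / 2) := by gcongr
    _ = 2 * rexp (-1) := by rw [mul_assoc, ← Real.exp_add]; ring_nf
    _ = 2 / rexp 1 := by rw [Real.exp_neg, div_eq_mul_inv]

lemma mul_mul_exp_neg_mul_sq_half_le (b : ℝ) {t : ℝ} (ht : 0 < t) :
    b * t * rexp (-b * t ^ 2 / 2) ≤ 2 / (rexp 1 * t) := by
  have key := mul_exp_neg_half_le (b * t ^ 2)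
  rw [le_div_iff₀ (by positivity)]
  calc b * t * rexp (-b * t ^ 2 / 2) * (rexp 1 * t)
      = b * t ^ 2 * rexp (-(b * t ^ 2) / 2) * rexp 1 := by ring_nf
    _ ≤ 2 / rexp 1 * rexp 1 := by gcongr
    _ = 2 := div_mul_cancel₀ _ (exp_pos 1).ne'

lemma exp_neg_mul_sq_half_le_of_le {τ b : ℝ} (h : τ ≤ b) (t : ℝ) :
    rexp (-b * t ^ 2 / 2) ≤ rexp (-τ * t ^ 2 / 2) := by
  gcongr

lemma hasDerivAt_cexp_chirp (a b t : ℝ) :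
    HasDerivAt (fun t : ℝ => cexp (I * a * t - b * t ^ 2 / 2))
      ((I * a - b * t) * cexp (I * a * t - b * t ^ 2 / 2)) t := by
  have hid : HasDerivAt (fun t : ℝ => (t : ℂ)) 1 t := ofRealCLM.hasDerivAt
  have hphase :=
    ((hid.const_mul (I * a)).fun_sub (((hid.fun_pow 2).const_mul (b : ℂ)).div_const 2)).cexp
  convert hphase using 1
  push_cast
  ring

lemma norm_cexp_chirp (a b t : ℝ) :
    ‖cexp (I * a * t - b * t ^ 2 / 2)‖ = rexp (-b * t ^ 2 / 2) := by
  rw [norm_exp]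
  congr 1
  simp [sub_re, mul_re, pow_two]
  ring

lemma norm_deriv_chirp_le (a : ℝ) {b t : ℝ} (hb : 0 ≤ b) (ht : 0 ≤ t) :
    ‖(I * a - b * t) * cexp (I * a * t - b * t ^ 2 / 2)‖ ≤ (|a| + b * t) * rexp (-b * t ^ 2 / 2) := by
  rw [norm_mul, norm_cexp_chirp]
  gcongr
  calc ‖I * a - b * t‖ ≤ ‖I * (a : ℂ)‖ + ‖(b : ℂ) * t‖ := norm_sub_le _ _
    _ = |a| + b * t := by
      rw [norm_mul, norm_mul, norm_I, one_mul, norm_real, norm_real, norm_real, Real.norm_eq_abs,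
        Real.norm_eq_abs, Real.norm_eq_abs, abs_of_nonneg hb, abs_of_nonneg ht]

lemma mul_sum_mul_le_mul_sum_mul {ι : Type*} [Fintype ι] (c : ℝ) (hc : 0 ≤ c) {f E : ι → ℝ} {M : ℝ}
    (hf : ∀ j, 0 ≤ f j) (hE : ∀ j, E j ≤ M) : c * ∑ j, f j * E j ≤ (c * ∑ j, f j) * M := by
  rw [mul_assoc, sum_mul]
  gcongr with j
  · exact hf j
  · exact hE j

lemma mean_le_of_forall_le {m : ℕ} (hm : 0 < m) {f : Fin m → ℝ} {M : ℝ} (hf : ∀ j, f j ≤ M) :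
    (1 / m : ℝ) * ∑ j, f j ≤ M := by
  calc (1 / m : ℝ) * ∑ j, f j ≤ (1 / m : ℝ) * ∑ _j : Fin m, M := by gcongr with j; exact hf j
    _ = M := by
      rw [sum_const, card_univ, Fintype.card_fin, nsmul_eq_mul]
      field_simp

theorem stmt10_general (m : ℕ) (hm : 0 < m) (A : ℝ)
    (a b : Fin m → ℝ) (hb : ∀ j, 0 ≤ b j)
    (havg : (1 / m : ℝ) * ∑ j, (|a j| + Real.sqrt (b j)) ≤ A)
    (havg2 : (1 / m : ℝ) * ∑ j, b j ≤ A ^ 2)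
    (τ : ℝ) (hτle : ∀ j, τ ≤ b j)
    (g : ℝ → ℂ)
    (hg : ∀ t : ℝ, g t = (1 / m : ℝ) *
      ∑ j, Complex.exp (Complex.I * (a j) * t - (b j) * t ^ 2 / 2)) :
    ∀ t : ℝ, 0 < t →
      ‖deriv g t‖ ≤
        A * Real.exp (-τ * t ^ 2 / 2) +
          min (A ^ 2 * t * Real.exp (-τ * t ^ 2 / 2)) (2 / (Real.exp 1 * t)) := by
  intro t ht
  set E := fun j => rexp (-b j * t ^ 2 / 2)
  have hE : ∀ j, E j ≤ rexp (-τ * t ^ 2 / 2) := fun j => exp_neg_mul_sq_half_le_of_le (hτle j) t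
  have hderiv : deriv g t = ((1 / m : ℝ) : ℂ) *
      ∑ j, (I * a j - b j * t) * cexp (I * a j * t - b j * t ^ 2 / 2) := by
    rw [funext hg]
    exact ((HasDerivAt.fun_sum fun j _ => hasDerivAt_cexp_chirp (a j) (b j) t).const_mul _).deriv
  have hnorm : ‖deriv g t‖ ≤ (1 / m : ℝ) * ∑ j, |a j| * E j + (1 / m : ℝ) * ∑ j, b j * t * E j := by
    rw [hderiv, ← mul_add, ← sum_add_distrib, norm_mul, norm_real, Real.norm_of_nonneg (by positivity)]
    gcongr
    refine (norm_sum_le _ _).trans (sum_le_sum fun j _ => ?_)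
    rw [← add_mul]
    exact norm_deriv_chirp_le (a j) (hb j) ht.le
  have hmean_abs : (1 / m : ℝ) * ∑ j, |a j| ≤ A :=
    le_trans (by gcongr with j; exact le_add_of_nonneg_right (sqrt_nonneg _)) havg
  have hfirst : (1 / m : ℝ) * ∑ j, |a j| * E j ≤ A * rexp (-τ * t ^ 2 / 2) :=
    (mul_sum_mul_le_mul_sum_mul _ (by positivity) (fun j => abs_nonneg _) hE).trans (by gcongr)
  have hsecond_mean : (1 / m : ℝ) * ∑ j, b j * t * E j ≤ A ^ 2 * t * rexp (-τ * t ^ 2 / 2) := by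
    refine (mul_sum_mul_le_mul_sum_mul _ (by positivity) (fun j => mul_nonneg (hb j) ht.le) hE).trans ?_
    rw [← sum_mul, ← mul_assoc]
    gcongr
  have hsecond_termwise : (1 / m : ℝ) * ∑ j, b j * t * E j ≤ 2 / (rexp 1 * t) :=
    mean_le_of_forall_le hm fun j => mul_mul_exp_neg_mul_sq_half_le (b j) ht
  linarith [le_min hsecond_mean hsecond_termwise]

theorem stmt10 (m : ℕ) (hm : 0 < m) (A : ℝ) (hA : 0 < A)
    (a b : Fin m → ℝ) (hb : ∀ j, 0 ≤ b j)
    (havg : (1 / m : ℝ) * ∑ j, (|a j| + Real.sqrt (b j)) ≤ A)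
    (havg2 : (1 / m : ℝ) * ∑ j, b j ≤ A ^ 2)
    (τ : ℝ) (hτle : ∀ j, τ ≤ b j) (hτmem : ∃ j, b j = τ)
    (g : ℝ → ℂ)
    (hg : ∀ t : ℝ, g t = (1 / m : ℝ) *
      ∑ j, Complex.exp (Complex.I * (a j) * t - (b j) * t ^ 2 / 2)) :
    ∀ t : ℝ, 0 < t →
      ‖deriv g t‖ ≤
        A * Real.exp (-τ * t ^ 2 / 2) +
          min (A ^ 2 * t * Real.exp (-τ * t ^ 2 / 2)) (2 / (Real.exp 1 * t)) :=
  stmt10_general m hm A a b hb havg havg2 τ hτle g hg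
end

section
/- Let ρ(x) = 2(1-cos x)/x² for x ≠ 0, ρ(0) = 1, and for δ ≥ 0 let φ_δ*ρ denote convolution of ρ with the N(0,δ²) density (with φ_0*ρ = ρ). If (a_n) and (b_n) are sequences of nonnegative reals with max{a_n, b_n} → ∞, then (φ_{a_n} * ρ)(b_n) → 0 as n → ∞. -/
open Real MeasureTheory Filter ProbabilityTheory

/-- Density of `N(0, δ²)` for `δ > 0`. -/
noncomputable def gaussDensity (δ x : ℝ) : ℝ :=
  (1 / (δ * Real.sqrt (2 * Real.pi))) * Real.exp (-x ^ 2 / (2 * δ ^ 2))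

/-- The function `ρ(x) = 2(1-cos x)/x²`, `ρ(0) = 1`. -/
noncomputable def rhoFun (x : ℝ) : ℝ :=
  if x = 0 then 1 else 2 * (1 - Real.cos x) / x ^ 2

/-- Convolution `(φ_δ * ρ)(y)`, with the convention `φ_0 * ρ = ρ`. -/
noncomputable def gaussConvRho (δ y : ℝ) : ℝ :=
  if δ = 0 then rhoFun y else ∫ u : ℝ, gaussDensity δ (y - u) * rhoFun u

/-!
Write `C = ∫ ρ`. Since `φ_δ ≤ 1/δ`, `(φ_δ * ρ)(y) ≤ C/δ`. For large `|y|` use `|t| φ_δ(t) ≤ 1`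
and `ρ(u) ≤ 4/u²`: for every `u`, either `|u| ≥ |y|/2`, where `ρ(u) ≤ 16/y²`, or
`|y - u| ≥ |y|/2`, where `φ_δ(y - u) ≤ 2/|y|`. Integrating the resulting pointwise bound gives
`(φ_δ * ρ)(y) ≤ 2C/|y| + 16/y²`. Both bounds are controlled by `max δ |y|`, which tends to `∞`.
-/

section Rho

lemma rhoFun_nonneg (x : ℝ) : 0 ≤ rhoFun x := by
  unfold rhoFun
  split
  · exact zero_le_one
  · exact div_nonneg (by linarith [cos_le_one x]) (sq_nonneg x)

lemma rhoFun_le_four_div_sq {x : ℝ} (hx : x ≠ 0) : rhoFun x ≤ 4 / x ^ 2 := by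
  rw [rhoFun, if_neg hx]
  gcongr
  linarith [neg_one_le_cos x]

lemma rhoFun_le_eight_div_one_add_sq (x : ℝ) : rhoFun x ≤ 8 / (1 + x ^ 2) := by
  by_cases hx : x = 0
  · simp [rhoFun, hx]
  rw [rhoFun, if_neg hx, div_le_div_iff₀ (by positivity) (by positivity)]
  have hcos : 1 - x ^ 2 / 2 ≤ cos x := one_sub_sq_div_two_le_cos
  nlinarith [mul_le_mul_of_nonneg_right (show 1 - cos x ≤ 2 by linarith [neg_one_le_cos x])
    (sq_nonneg x)]

lemma measurable_rhoFun : Measurable rhoFun :=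
  Measurable.ite (measurableSet_singleton 0) measurable_const (by fun_prop)

lemma integrable_rhoFun : Integrable rhoFun := by
  refine (integrable_inv_one_add_sq.const_mul 8).mono measurable_rhoFun.aestronglyMeasurable
    (ae_of_all _ fun x => ?_)
  rw [norm_of_nonneg (rhoFun_nonneg x), norm_of_nonneg (by positivity), ← div_eq_mul_inv]
  exact rhoFun_le_eight_div_one_add_sq x

end Rho

section Gauss

variable {δ : ℝ}

lemma gaussDensity_nonneg (hδ : 0 ≤ δ) (x : ℝ) : 0 ≤ gaussDensity δ x := by
  unfold gaussDensity
  positivity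

lemma measurable_gaussDensity : Measurable (gaussDensity δ) := by
  unfold gaussDensity
  fun_prop

lemma one_le_sqrt_two_mul_pi : 1 ≤ √(2 * π) :=
  one_le_sqrt.2 (by nlinarith [pi_gt_three])

lemma gaussDensity_le_inv (hδ : 0 < δ) (x : ℝ) : gaussDensity δ x ≤ δ⁻¹ := by
  unfold gaussDensity
  calc 1 / (δ * √(2 * π)) * exp (-x ^ 2 / (2 * δ ^ 2)) ≤ 1 / (δ * 1) * 1 := by
        gcongr
        · exact one_le_sqrt_two_mul_pi
        · exact exp_le_one_iff.2 (div_nonpos_of_nonpos_of_nonneg (by nlinarith) (by positivity))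
    _ = δ⁻¹ := by ring

lemma abs_mul_gaussDensity_le_one (hδ : 0 < δ) (t : ℝ) : |t| * gaussDensity δ t ≤ 1 := by
  set s := |t| / δ
  -- `s ≤ 1 + s²/2 ≤ exp (s²/2)`
  have hs : s ≤ exp (s ^ 2 / 2) := by
    nlinarith [add_one_le_exp (s ^ 2 / 2), sq_nonneg (s - 1)]
  have hexp : exp (-t ^ 2 / (2 * δ ^ 2)) = (exp (s ^ 2 / 2))⁻¹ := by
    rw [← exp_neg, div_pow, sq_abs]
    ring_nf
  rw [gaussDensity, hexp]
  calc |t| * (1 / (δ * √(2 * π)) * (exp (s ^ 2 / 2))⁻¹)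
      = s * (exp (s ^ 2 / 2))⁻¹ / √(2 * π) := by
        simp only [s]
        field_simp
    _ ≤ 1 := by
        rw [div_le_one (by linarith [one_le_sqrt_two_mul_pi]),
          mul_inv_le_iff₀ (exp_pos _)]
        nlinarith [one_le_sqrt_two_mul_pi, exp_pos (s ^ 2 / 2)]

lemma gaussDensity_sub_eq_gaussianPDFReal (hδ : 0 < δ) (y u : ℝ) :
    gaussDensity δ (y - u) = gaussianPDFReal y (δ ^ 2).toNNReal u := by
  rw [gaussDensity, gaussianPDFReal, coe_toNNReal _ (sq_nonneg δ),
    show 2 * π * δ ^ 2 = δ ^ 2 * (2 * π) by ring, sqrt_mul (sq_nonneg δ), sqrt_sq hδ.le,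
    one_div, show (y - u) ^ 2 = (u - y) ^ 2 by ring]

lemma integral_gaussDensity_sub (hδ : 0 < δ) (y : ℝ) : ∫ u, gaussDensity δ (y - u) = 1 := by
  simp_rw [gaussDensity_sub_eq_gaussianPDFReal hδ y]
  exact integral_gaussianPDFReal_eq_one y (by positivity)

lemma integrable_gaussDensity_sub (hδ : 0 < δ) (y : ℝ) :
    Integrable fun u => gaussDensity δ (y - u) := by
  simp_rw [gaussDensity_sub_eq_gaussianPDFReal hδ y]
  exact integrable_gaussianPDFReal y _

end Gauss

section Conv

variable {δ : ℝ}

lemma integrable_gaussDensity_sub_mul_rhoFun (hδ : 0 < δ) (y : ℝ) :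
    Integrable fun u => gaussDensity δ (y - u) * rhoFun u :=
  integrable_rhoFun.bdd_mul (c := δ⁻¹)
    (measurable_gaussDensity.comp (by fun_prop)).aestronglyMeasurable (ae_of_all _ fun u => by
      rw [norm_of_nonneg (gaussDensity_nonneg hδ.le _)]
      exact gaussDensity_le_inv hδ _)

lemma gaussConvRho_nonneg (hδ : 0 ≤ δ) (y : ℝ) : 0 ≤ gaussConvRho δ y := by
  unfold gaussConvRho
  split
  · exact rhoFun_nonneg y
  · exact integral_nonneg fun u => mul_nonneg (gaussDensity_nonneg hδ _) (rhoFun_nonneg u)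

lemma gaussConvRho_le_integral_div (hδ : 0 < δ) (y : ℝ) :
    gaussConvRho δ y ≤ (∫ x, rhoFun x) / δ := by
  rw [gaussConvRho, if_neg hδ.ne', div_eq_inv_mul, ← integral_const_mul]
  exact integral_mono (integrable_gaussDensity_sub_mul_rhoFun hδ y)
    (integrable_rhoFun.const_mul _)
    fun u => mul_le_mul_of_nonneg_right (gaussDensity_le_inv hδ _) (rhoFun_nonneg u)

lemma gaussDensity_sub_mul_rhoFun_le (hδ : 0 < δ) {y : ℝ} (hy : y ≠ 0) (u : ℝ) :
    gaussDensity δ (y - u) * rhoFun u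
      ≤ 2 / |y| * rhoFun u + 16 / y ^ 2 * gaussDensity δ (y - u) := by
  have hy' : 0 < |y| := abs_pos.2 hy
  have hφ := gaussDensity_nonneg hδ.le (y - u)
  have hρ := rhoFun_nonneg u
  rcases le_or_gt (|y| / 2) |u| with hu | hu
  · have hu0 : u ≠ 0 := by rintro rfl; simp at hu; linarith
    have : rhoFun u ≤ 16 / y ^ 2 := by
      refine (rhoFun_le_four_div_sq hu0).trans ?_
      rw [div_le_div_iff₀ (by positivity) (by positivity), ← sq_abs u, ← sq_abs y]
      nlinarith
    nlinarith [mul_le_mul_of_nonneg_left this hφ, mul_nonneg (div_nonneg zero_le_two hy'.le) hρ]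
  · have hyu : |y| / 2 < |y - u| := by linarith [abs_sub_abs_le_abs_sub y u]
    have : gaussDensity δ (y - u) ≤ 2 / |y| := by
      rw [le_div_iff₀ hy']
      nlinarith [abs_mul_gaussDensity_le_one hδ (y - u)]
    nlinarith [mul_le_mul_of_nonneg_right this hρ,
      mul_nonneg (div_nonneg (by norm_num : (0 : ℝ) ≤ 16) (sq_nonneg y)) hφ]

lemma gaussConvRho_le_of_ne_zero (hδ : 0 ≤ δ) {y : ℝ} (hy : y ≠ 0) :
    gaussConvRho δ y ≤ 2 * (∫ x, rhoFun x) / |y| + 16 / y ^ 2 := by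
  have hC : 0 ≤ 2 * (∫ x, rhoFun x) / |y| := by
    have : 0 ≤ ∫ x, rhoFun x := integral_nonneg rhoFun_nonneg
    positivity
  rcases hδ.eq_or_lt with rfl | hδ
  · rw [gaussConvRho, if_pos rfl]
    have : 4 / y ^ 2 ≤ 16 / y ^ 2 := by gcongr; norm_num
    linarith [rhoFun_le_four_div_sq hy]
  rw [gaussConvRho, if_neg hδ.ne']
  calc ∫ u, gaussDensity δ (y - u) * rhoFun u
      ≤ ∫ u, (2 / |y| * rhoFun u + 16 / y ^ 2 * gaussDensity δ (y - u)) :=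
        integral_mono (integrable_gaussDensity_sub_mul_rhoFun hδ y)
          ((integrable_rhoFun.const_mul _).add ((integrable_gaussDensity_sub hδ y).const_mul _))
          (gaussDensity_sub_mul_rhoFun_le hδ hy)
    _ = 2 * (∫ x, rhoFun x) / |y| + 16 / y ^ 2 := by
        rw [integral_add (integrable_rhoFun.const_mul _)
            ((integrable_gaussDensity_sub hδ y).const_mul _),
          integral_const_mul, integral_const_mul, integral_gaussDensity_sub hδ y]
        ring

lemma gaussConvRho_le_of_max_pos (hδ : 0 ≤ δ) {y : ℝ} (hm : 0 < max δ |y|) :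
    gaussConvRho δ y ≤ 2 * (∫ x, rhoFun x) / max δ |y| + 16 / max δ |y| ^ 2 := by
  have hC : 0 ≤ ∫ x, rhoFun x := integral_nonneg rhoFun_nonneg
  rcases le_total |y| δ with h | h
  · rw [max_eq_left h] at hm ⊢
    have : (∫ x, rhoFun x) / δ ≤ 2 * (∫ x, rhoFun x) / δ := by gcongr; linarith
    linarith [gaussConvRho_le_integral_div hm y, show 0 ≤ 16 / δ ^ 2 by positivity]
  · rw [max_eq_right h] at hm ⊢
    rw [sq_abs]
    exact gaussConvRho_le_of_ne_zero hδ (abs_pos.1 hm)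

end Conv

theorem stmt13_general (a b : ℕ → ℝ) (ha : ∀ n, 0 ≤ a n)
    (hmax : Tendsto (fun n => max (a n) (b n)) atTop atTop) :
    Tendsto (fun n => gaussConvRho (a n) (b n)) atTop (nhds 0) := by
  set m := fun n => max (a n) |b n|
  have hm : Tendsto m atTop atTop :=
    tendsto_atTop_mono (fun n => max_le_max le_rfl (le_abs_self _)) hmax
  have hbound : Tendsto (fun n => 2 * (∫ x, rhoFun x) / m n + 16 / m n ^ 2) atTop (nhds 0) := by
    simpa using (tendsto_const_nhds.div_atTop hm).add
      (tendsto_const_nhds.div_atTop ((tendsto_pow_atTop two_ne_zero).comp hm))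
  refine tendsto_of_tendsto_of_tendsto_of_le_of_le' tendsto_const_nhds hbound
    (Eventually.of_forall fun n => gaussConvRho_nonneg (ha n) _) ?_
  filter_upwards [hm.eventually_gt_atTop 0] with n hn
  exact gaussConvRho_le_of_max_pos (ha n) hn

theorem stmt13 (a b : ℕ → ℝ) (ha : ∀ n, 0 ≤ a n) (hb : ∀ n, 0 ≤ b n)
    (hmax : Tendsto (fun n => max (a n) (b n)) atTop atTop) :
    Tendsto (fun n => gaussConvRho (a n) (b n)) atTop (nhds 0) :=
  stmt13_general a b ha hmax
end

section
/- Let φ(t) = (1/n)Σ_j exp(iμ_j t - σ_j²t²/2) with all σ_j ≥ σ₀ > 0, the proportion of j with (μ_j,σ_j) ≠ (μ₀,σ₀) at most ε₀ < 1/2. For γ ∈ (0,1/2) define t_n(γ) = inf{t ∈ [0, log n] : |φ(t)| = n^{-γ}} (which exists for n large). Then t_n(γ) = (√(2γ log n)/σ₀)·(1 + o(1)) as n → ∞. -/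
open Complex Real Finset Filter

/-!
Every summand of `φ` has modulus `exp (-σ_j² t² / 2) ≤ exp (-σ₀² t² / 2)`, with equality for the
summands equal to `(μ₀, σ₀)`, which are all equal; since at most `ε₀ n` summands differ from them,
`(1 - 2ε₀) e^{-σ₀²t²/2} ≤ |φ(t)| ≤ e^{-σ₀²t²/2}`. The level set `{t ∈ [0, log n] : |φ(t)| = n^{-γ}}`
is compact, and nonempty by the intermediate value theorem, so its infimum `T` lies in it. Taking
logarithms in the two-sided bound at `T` gives `2γ log n + 2 log (1 - 2ε₀) ≤ σ₀² T² ≤ 2γ log n`,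
hence `σ₀² T² / (2γ log n) → 1`.
-/

lemma card_sub_two_mul_card_mul_norm_le_norm_sum {ι E : Type*} [Fintype ι] [NormedAddCommGroup E]
    [NormedSpace ℝ E] (f : ι → E) (z : E) (B : Finset ι) (hf : ∀ j ∉ B, f j = z)
    (hB : ∀ j ∈ B, ‖f j‖ ≤ ‖z‖) :
    ((Fintype.card ι : ℝ) - 2 * #B) * ‖z‖ ≤ ‖∑ j, f j‖ := by
  have hsplit : ∑ j, f j = Fintype.card ι • z + ∑ j ∈ B, (f j - z) := by
    rw [Finset.sum_subset (subset_univ B) fun j _ hj ↦ by simp [hf j hj], sum_sub_distrib]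
    simp
  have hdev : ‖∑ j ∈ B, (f j - z)‖ ≤ #B * (2 * ‖z‖) :=
    calc ‖∑ j ∈ B, (f j - z)‖ ≤ ∑ j ∈ B, ‖f j - z‖ := norm_sum_le _ _
      _ ≤ ∑ _j ∈ B, 2 * ‖z‖ :=
        sum_le_sum fun j hj ↦ (norm_sub_le _ _).trans (by linarith [hB j hj])
      _ = #B * (2 * ‖z‖) := by simp
  have hmain := norm_sub_le (Fintype.card ι • z + ∑ j ∈ B, (f j - z)) (∑ j ∈ B, (f j - z))
  rw [add_sub_cancel_right, RCLike.norm_nsmul ℝ, nsmul_eq_mul, ← hsplit] at hmain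
  linarith

lemma norm_cexp_gaussian (m s t : ℝ) :
    ‖cexp (I * m * t - s ^ 2 * t ^ 2 / 2)‖ = rexp (-(s ^ 2 * t ^ 2 / 2)) := by
  rw [Complex.norm_exp]
  congr 1
  simp [← Complex.ofReal_pow]

lemma norm_cexp_gaussian_le {m s σ₀ : ℝ} (hσ₀ : 0 ≤ σ₀) (hs : σ₀ ≤ s) (t : ℝ) :
    ‖cexp (I * m * t - s ^ 2 * t ^ 2 / 2)‖ ≤ rexp (-(σ₀ ^ 2 * t ^ 2 / 2)) := by
  rw [norm_cexp_gaussian]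
  gcongr

lemma sInf_levelSet_mem {f : ℝ → ℝ} (hf : Continuous f) {L y : ℝ} (hL : 0 ≤ L)
    (hfL : f L ≤ y) (hf0 : y ≤ f 0) :
    sInf {t | t ∈ Set.Icc 0 L ∧ f t = y} ∈ {t | t ∈ Set.Icc 0 L ∧ f t = y} := by
  have hne : {t | t ∈ Set.Icc 0 L ∧ f t = y}.Nonempty :=
    intermediate_value_Icc' hL hf.continuousOn ⟨hfL, hf0⟩
  exact (isCompact_Icc.inter_right (isClosed_eq hf continuous_const)).sInf_mem hne

lemma sq_bounds_of_gaussian_bounds {s c y t : ℝ} (hc : 0 < c)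
    (hupper : y ≤ rexp (-(s ^ 2 * t ^ 2 / 2))) (hlower : c * rexp (-(s ^ 2 * t ^ 2 / 2)) ≤ y) :
    -2 * Real.log y + 2 * Real.log c ≤ (s * t) ^ 2 ∧ (s * t) ^ 2 ≤ -2 * Real.log y := by
  have hy : 0 < y := lt_of_lt_of_le (by positivity) hlower
  have hup := Real.log_le_log hy hupper
  have hlow := Real.log_le_log (by positivity) hlower
  rw [Real.log_exp] at hup
  rw [Real.log_mul hc.ne' (Real.exp_pos _).ne', Real.log_exp] at hlow
  constructor <;> linarith

lemma tendsto_div_one_of_sub_bounded {α : Type*} {l : Filter α} {x b : α → ℝ} {K : ℝ}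
    (hb : Tendsto b l atTop) (hx : ∀ᶠ a in l, b a + K ≤ x a ∧ x a ≤ b a) :
    Tendsto (fun a ↦ x a / b a) l (nhds 1) := by
  have hlow : Tendsto (fun a ↦ 1 + K / b a) l (nhds 1) := by
    simpa using tendsto_const_nhds.add (hb.const_div_atTop K)
  refine tendsto_of_tendsto_of_tendsto_of_le_of_le' hlow tendsto_const_nhds ?_ ?_
  · filter_upwards [hx, hb.eventually_gt_atTop 0] with a ⟨hxa, _⟩ hba
    rw [one_add_div hba.ne']
    gcongr
  · filter_upwards [hx, hb.eventually_gt_atTop 0] with a ⟨_, hxa⟩ hba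
    exact div_le_one_of_le₀ hxa hba.le

noncomputable def mixtureCharFun {n : ℕ} (μ σ : Fin n → ℝ) (t : ℝ) : ℂ :=
  (1 / n : ℝ) * ∑ j, cexp (I * μ j * t - σ j ^ 2 * t ^ 2 / 2)

noncomputable def levelHittingTime {n : ℕ} (μ σ : Fin n → ℝ) (γ : ℝ) : ℝ :=
  sInf {t : ℝ | t ∈ Set.Icc 0 (Real.log n) ∧ ‖mixtureCharFun μ σ t‖ = (n : ℝ) ^ (-γ)}

section mixtureCharFun

variable {n : ℕ} {μ σ : Fin n → ℝ} {σ₀ : ℝ}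

lemma continuous_mixtureCharFun : Continuous (mixtureCharFun μ σ) := by
  unfold mixtureCharFun
  fun_prop

lemma mixtureCharFun_zero (hn : n ≠ 0) : mixtureCharFun μ σ 0 = 1 := by
  simp [mixtureCharFun, hn]

lemma norm_mixtureCharFun_le (hσ₀ : 0 ≤ σ₀) (hσ : ∀ j, σ₀ ≤ σ j) (t : ℝ) :
    ‖mixtureCharFun μ σ t‖ ≤ rexp (-(σ₀ ^ 2 * t ^ 2 / 2)) := by
  rcases Nat.eq_zero_or_pos n with rfl | hn
  · simp [mixtureCharFun, (Real.exp_pos _).le]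
  have hsum : ‖∑ j, cexp (I * μ j * t - σ j ^ 2 * t ^ 2 / 2)‖ ≤
      n * rexp (-(σ₀ ^ 2 * t ^ 2 / 2)) := by
    simpa using norm_sum_le_of_le univ fun j _ ↦ norm_cexp_gaussian_le hσ₀ (hσ j) t
  rw [mixtureCharFun, norm_mul, Complex.norm_real, Real.norm_of_nonneg (by positivity),
    div_mul_eq_mul_div, one_mul, div_le_iff₀ (by positivity), mul_comm]
  exact hsum

lemma one_sub_two_mul_le_norm_mixtureCharFun (hσ₀ : 0 ≤ σ₀) (hσ : ∀ j, σ₀ ≤ σ j)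
    {μ₀ ε₀ : ℝ} (hbad : (#{j | (μ j, σ j) ≠ (μ₀, σ₀)} : ℝ) ≤ ε₀ * n) (hn : n ≠ 0) (t : ℝ) :
    (1 - 2 * ε₀) * rexp (-(σ₀ ^ 2 * t ^ 2 / 2)) ≤ ‖mixtureCharFun μ σ t‖ := by
  set z := cexp (I * μ₀ * t - σ₀ ^ 2 * t ^ 2 / 2)
  have hz : ‖z‖ = rexp (-(σ₀ ^ 2 * t ^ 2 / 2)) := norm_cexp_gaussian μ₀ σ₀ t
  have hsum := card_sub_two_mul_card_mul_norm_le_norm_sum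
    (fun j ↦ cexp (I * μ j * t - σ j ^ 2 * t ^ 2 / 2)) z {j | (μ j, σ j) ≠ (μ₀, σ₀)}
    (fun j hj ↦ by
      obtain ⟨hμ, hσ⟩ : μ j = μ₀ ∧ σ j = σ₀ := by simpa using hj
      simp only [z, hμ, hσ])
    (fun j _ ↦ hz ▸ norm_cexp_gaussian_le hσ₀ (hσ j) t)
  have hnpos : (0 : ℝ) < n := by positivity
  rw [Fintype.card_fin, hz] at hsum
  rw [mixtureCharFun, norm_mul, Complex.norm_real, Real.norm_of_nonneg (by positivity),
    div_mul_eq_mul_div, one_mul, le_div_iff₀ hnpos]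
  nlinarith [Real.exp_pos (-(σ₀ ^ 2 * t ^ 2 / 2))]

lemma levelHittingTime_bounds (hn : n ≠ 0) (hσ₀ : 0 ≤ σ₀) (hσ : ∀ j, σ₀ ≤ σ j) {μ₀ ε₀ : ℝ}
    (hbad : (#{j | (μ j, σ j) ≠ (μ₀, σ₀)} : ℝ) ≤ ε₀ * n) (hε : ε₀ < 1 / 2) {γ : ℝ}
    (hγ : 0 ≤ γ) (hlog : 2 * γ ≤ σ₀ ^ 2 * Real.log n) :
    0 ≤ levelHittingTime μ σ γ ∧
      2 * γ * Real.log n + 2 * Real.log (1 - 2 * ε₀) ≤ (σ₀ * levelHittingTime μ σ γ) ^ 2 ∧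
      (σ₀ * levelHittingTime μ σ γ) ^ 2 ≤ 2 * γ * Real.log n := by
  have hlevel : Real.log ((n : ℝ) ^ (-γ)) = -γ * Real.log n := Real.log_rpow (by positivity) _
  have hfL : ‖mixtureCharFun μ σ (Real.log n)‖ ≤ (n : ℝ) ^ (-γ) := by
    rw [← Real.exp_log (by positivity : (0 : ℝ) < n ^ (-γ)), hlevel]
    refine (norm_mixtureCharFun_le hσ₀ hσ _).trans (Real.exp_le_exp.mpr ?_)
    nlinarith [Real.log_natCast_nonneg n]
  have hf0 : (n : ℝ) ^ (-γ) ≤ ‖mixtureCharFun μ σ 0‖ := by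
    rw [mixtureCharFun_zero hn, norm_one]
    exact Real.rpow_le_one_of_one_le_of_nonpos (mod_cast Nat.one_le_iff_ne_zero.mpr hn)
      (by linarith)
  obtain ⟨⟨hT0, -⟩, hT : ‖mixtureCharFun μ σ (levelHittingTime μ σ γ)‖ = _⟩ :=
    sInf_levelSet_mem (continuous_norm.comp continuous_mixtureCharFun)
      (Real.log_natCast_nonneg n) hfL hf0
  obtain ⟨hlo, hhi⟩ := sq_bounds_of_gaussian_bounds (by linarith : 0 < 1 - 2 * ε₀)
    (hT.symm.le.trans (norm_mixtureCharFun_le hσ₀ hσ _))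
    ((one_sub_two_mul_le_norm_mixtureCharFun hσ₀ hσ hbad hn _).trans hT.le)
  rw [hlevel] at hlo hhi
  exact ⟨hT0, by linarith, by linarith⟩

end mixtureCharFun

theorem stmt15_general (μ₀ σ₀ ε₀ γ : ℝ) (hσ : 0 < σ₀) (hε' : ε₀ < 1 / 2)
    (hγ : 0 < γ)
    (μ σ : (n : ℕ) → Fin n → ℝ)
    (hσj : ∀ n j, σ₀ ≤ σ n j)
    (hprop : ∀ n : ℕ,
      ((Finset.univ.filter (fun j => (μ n j, σ n j) ≠ (μ₀, σ₀))).card : ℝ) ≤ ε₀ * n)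
    (φ : ℕ → ℝ → ℂ)
    (hφ : ∀ (n : ℕ) (t : ℝ), φ n t = (1 / n : ℝ) *
      ∑ j, Complex.exp (Complex.I * (μ n j) * t - (σ n j) ^ 2 * t ^ 2 / 2))
    (tn : ℕ → ℝ)
    (htn : ∀ n : ℕ, tn n =
      sInf {t : ℝ | t ∈ Set.Icc 0 (Real.log n) ∧ ‖φ n t‖ = (n : ℝ) ^ (-γ)}) :
    Tendsto (fun n : ℕ => tn n / (Real.sqrt (2 * γ * Real.log n) / σ₀)) atTop (nhds 1) := by
  obtain rfl : φ = fun n ↦ mixtureCharFun (μ n) (σ n) := funext fun n ↦ funext (hφ n)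
  obtain rfl : tn = fun n ↦ levelHittingTime (μ n) (σ n) γ := funext htn
  have hlog : Tendsto (fun n : ℕ ↦ Real.log n) atTop atTop :=
    Real.tendsto_log_atTop.comp tendsto_natCast_atTop_atTop
  have hbounds : ∀ᶠ n : ℕ in atTop, 0 ≤ levelHittingTime (μ n) (σ n) γ ∧
      2 * γ * Real.log n + 2 * Real.log (1 - 2 * ε₀) ≤
        (σ₀ * levelHittingTime (μ n) (σ n) γ) ^ 2 ∧
      (σ₀ * levelHittingTime (μ n) (σ n) γ) ^ 2 ≤ 2 * γ * Real.log n := by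
    filter_upwards [eventually_ne_atTop 0,
      (hlog.const_mul_atTop (pow_pos hσ 2)).eventually_ge_atTop (2 * γ)] with n hn hlogn
    exact levelHittingTime_bounds hn hσ.le (hσj n) (hprop n) hε' hγ.le hlogn
  have hratio := (tendsto_div_one_of_sub_bounded (hlog.const_mul_atTop (by positivity))
    (hbounds.mono fun _ h ↦ h.2)).sqrt
  rw [Real.sqrt_one] at hratio
  refine hratio.congr' ?_
  filter_upwards [hbounds] with n hn
  rw [Real.sqrt_div' _ (by positivity), Real.sqrt_sq (mul_nonneg hσ.le hn.1), div_div_eq_mul_div,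
    mul_comm]

theorem stmt15 (μ₀ σ₀ ε₀ γ : ℝ) (hσ : 0 < σ₀) (hε : 0 < ε₀) (hε' : ε₀ < 1 / 2)
    (hγ : 0 < γ) (hγ' : γ < 1 / 2)
    (μ σ : (n : ℕ) → Fin n → ℝ)
    (hσj : ∀ n j, σ₀ ≤ σ n j)
    (hprop : ∀ n : ℕ,
      ((Finset.univ.filter (fun j => (μ n j, σ n j) ≠ (μ₀, σ₀))).card : ℝ) ≤ ε₀ * n)
    (φ : ℕ → ℝ → ℂ)
    (hφ : ∀ (n : ℕ) (t : ℝ), φ n t = (1 / n : ℝ) *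
      ∑ j, Complex.exp (Complex.I * (μ n j) * t - (σ n j) ^ 2 * t ^ 2 / 2))
    (tn : ℕ → ℝ)
    (htn : ∀ n : ℕ, tn n =
      sInf {t : ℝ | t ∈ Set.Icc 0 (Real.log n) ∧ ‖φ n t‖ = (n : ℝ) ^ (-γ)}) :
    Tendsto (fun n : ℕ => tn n / (Real.sqrt (2 * γ * Real.log n) / σ₀)) atTop (nhds 1) :=
  stmt15_general μ₀ σ₀ ε₀ γ hσ hε' hγ μ σ hσj hprop φ hφ tn htn
end
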